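/- Let n ≥ 4, and on ℝ^{2n} define q(y) = Σ_{i=1}^n (-1)^{i-1} y_i y_{2n+1-i}, with C = {q = 0}. For s = 1,...,n-3 set p_s = Σ_{k=1}^{s+1} (-1)^{s+1-k} y_k y_{2n+1-k}. Suppose v ∈ C satisfies y_1 > 0, y_n > 0, y_{n+1} > 0, y_{2n} > 0, p_s > 0 for all s = 1,...,n-3, and y_k > 0 for all k = 2,...,n-1. Then y_{2n+1-k}(v) > 0 for all k = 2,...,n-1. -/
import Mathlib


open Finset

lemma prec_aux (f : ℕ → ℝ) (s : ℕ) :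
    ∑ k ∈ Icc 1 (s + 2), (-1 : ℝ) ^ (s + 2 - k) * f k
      = f (s + 2) - ∑ k ∈ Icc 1 (s + 1), (-1 : ℝ) ^ (s + 1 - k) * f k := by
  rw [Finset.sum_Icc_succ_top (by omega : 1 ≤ s + 2)]
  have h : ∀ k ∈ Icc 1 (s + 1),
      (-1 : ℝ) ^ (s + 2 - k) * f k = -((-1 : ℝ) ^ (s + 1 - k) * f k) := by
    intro k hk
    simp only [mem_Icc] at hk
    rw [show s + 2 - k = (s + 1 - k) + 1 by omega]
    ring
  rw [Finset.sum_congr rfl h, Finset.sum_neg_distrib]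
  simp
  ring

lemma qp_aux (f : ℕ → ℝ) (s : ℕ) :
    ∑ i ∈ Icc 1 (s + 1), (-1 : ℝ) ^ (i - 1) * f i
      = (-1 : ℝ) ^ s * ∑ k ∈ Icc 1 (s + 1), (-1 : ℝ) ^ (s + 1 - k) * f k := by
  induction s with
  | zero => simp
  | succ t ih =>
    rw [show t + 1 + 1 = t + 2 from rfl, Finset.sum_Icc_succ_top (by omega : 1 ≤ t + 2),
      ih, prec_aux]
    have : (t + 2 : ℕ) - 1 = t + 1 := by omega
    rw [this]
    ring

/-- For `n ≥ 4`, on the cone `C = {q = 0}` of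
`q(y) = Σ_{i=1}^n (-1)^{i-1} y_i y_{2n+1-i}` in `ℝ^{2n}`, with
`p_s = Σ_{k=1}^{s+1} (-1)^{s+1-k} y_k y_{2n+1-k}` for `1 ≤ s ≤ n-3`,
the positivity of `y₁, y_n, y_{n+1}, y_{2n}`, of all `p_s`, and of
`y_k` for `2 ≤ k ≤ n-1` implies positivity of `y_{2n+1-k}` for
`2 ≤ k ≤ n-1`. -/
theorem quadric_totally_positive_part (n : ℕ) (hn : 4 ≤ n) (y : ℕ → ℝ)
    (hC : ∑ i ∈ Finset.Icc 1 n, (-1 : ℝ) ^ (i - 1) * (y i * y (2 * n + 1 - i)) = 0)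
    (h1 : 0 < y 1) (hn' : 0 < y n) (hn1 : 0 < y (n + 1)) (h2n : 0 < y (2 * n))
    (hp : ∀ s ∈ Finset.Icc 1 (n - 3),
      0 < ∑ k ∈ Finset.Icc 1 (s + 1), (-1 : ℝ) ^ (s + 1 - k) * (y k * y (2 * n + 1 - k)))
    (hy : ∀ k ∈ Finset.Icc 2 (n - 1), 0 < y k) :
    ∀ k ∈ Finset.Icc 2 (n - 1), 0 < y (2 * n + 1 - k) := by
  obtain ⟨m, rfl⟩ : ∃ m, n = m + 4 := ⟨n - 4, by omega⟩
  set f : ℕ → ℝ := fun k => y k * y (2 * (m + 4) + 1 - k) with hf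
  set P : ℕ → ℝ := fun s => ∑ k ∈ Icc 1 (s + 1), (-1 : ℝ) ^ (s + 1 - k) * f k with hPdef
  have Prec : ∀ s, P (s + 1) = f (s + 2) - P s := by
    intro s
    simp only [hPdef]
    exact prec_aux f s
  have Ppos : ∀ s ≤ m + 1, 0 < P s := by
    intro s hs
    rcases Nat.eq_zero_or_pos s with rfl | hs0
    · have : P 0 = y 1 * y (2 * (m + 4)) := by
        simp [hPdef, hf]
      rw [this]
      exact mul_pos h1 h2n
    · have hmem : s ∈ Finset.Icc 1 (m + 4 - 3) := by
        simp only [mem_Icc]; omega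
      have := hp s hmem
      simpa [hPdef, hf] using this
  have fpos_mid : ∀ t, t ≤ m → 0 < f (t + 2) := by
    intro t ht
    have h1' := Ppos (t + 1) (by omega)
    have h2' := Ppos t (by omega)
    have := Prec t
    linarith
  have hPn : P (m + 3) = 0 := by
    have hq := qp_aux f (m + 3)
    have : ∑ i ∈ Icc 1 (m + 4), (-1 : ℝ) ^ (i - 1) * f i = 0 := by
      simpa [hf] using hC
    rw [show m + 4 = m + 3 + 1 from rfl, hq] at this
    have hne : ((-1 : ℝ) ^ (m + 3)) ≠ 0 := by positivity
    have := mul_eq_zero.mp this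
    rcases this with h | h
    · exact absurd h hne
    · exact h
  have ftop : 0 < f (m + 3) := by
    have e1 := Prec (m + 2)
    have e2 := Prec (m + 1)
    have hP1 := Ppos (m + 1) (by omega)
    have hfn : 0 < f (m + 4) := by
      have : f (m + 4) = y (m + 4) * y (m + 4 + 1) := by
        simp only [hf]
        congr 2
        omega
      rw [this]
      exact mul_pos hn' hn1
    rw [hPn] at e1
    linarith
  intro k hk
  simp only [mem_Icc] at hk
  have hyk : 0 < y k := hy k (by simp only [mem_Icc]; omega)
  have hfk : 0 < f k := by
    rcases Nat.lt_or_ge k (m + 3) with h | h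
    · obtain ⟨t, rfl⟩ : ∃ t, k = t + 2 := ⟨k - 2, by omega⟩
      exact fpos_mid t (by omega)
    · have : k = m + 3 := by omega
      rw [this]; exact ftop
  have : f k = y k * y (2 * (m + 4) + 1 - k) := rfl
  rw [this] at hfk
  nlinarith
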